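/- arXiv:1711.06492 — 2 statements merged into one kernel-verified Lean document; each statement's English description precedes it below -/
import Mathlib

section
/- For all values of the parameters Υ_ν, Υ_e, Υ_u, Υ_d, Υ_R ∈ ℂ, the Clifford algebra Cl_{D_F}(A_F) is contained in B: π_F(a) ∈ B and [D_F, π_F(a)] ∈ B for every a ∈ A_F. -/
open Matrix ComplexConjugate

noncomputable section

/-- The internal Hilbert space of the Standard Model (one generation):
8×4 complex matrices. -/
abbrev HF : Type := Matrix (Fin 8) (Fin 4) ℂ

abbrev M8 : Type := Matrix (Fin 8) (Fin 8) ℂ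
abbrev M4 : Type := Matrix (Fin 4) (Fin 4) ℂ
abbrev M3 : Type := Matrix (Fin 3) (Fin 3) ℂ
abbrev M2 : Type := Matrix (Fin 2) (Fin 2) ℂ

/-- A 2×2 complex matrix is of quaternionic form. -/
def IsQuat (q : M2) : Prop :=
  ∃ α β : ℂ, q 0 0 = α ∧ q 0 1 = β ∧ q 1 0 = -conj β ∧ q 1 1 = conj α

/-- The block-diagonal matrix with diagonal blocks λ, conj λ, q, λ, m
(of sizes 1,1,2,1,3). -/
def Pmat (l : ℂ) (q : M2) (m : M3) : M8 :=
  Matrix.of fun i j =>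
    if i = 0 ∧ j = 0 then l
    else if i = 1 ∧ j = 1 then conj l
    else if h : 2 ≤ (i : ℕ) ∧ (i : ℕ) < 4 ∧ 2 ≤ (j : ℕ) ∧ (j : ℕ) < 4 then
      q ⟨(i : ℕ) - 2, by omega⟩ ⟨(j : ℕ) - 2, by omega⟩
    else if i = 4 ∧ j = 4 then l
    else if h : 5 ≤ (i : ℕ) ∧ 5 ≤ (j : ℕ) then
      m ⟨(i : ℕ) - 5, by have := i.isLt; omega⟩ ⟨(j : ℕ) - 5, by have := j.isLt; omega⟩
    else 0

/-- The operator ξ ↦ A ξ B on H_F. -/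
def lrOp (A : M8) (B : M4) : Module.End ℂ HF where
  toFun ξ := A * ξ * B
  map_add' x y := by simp [Matrix.mul_add, Matrix.add_mul]
  map_smul' c x := by simp [Matrix.mul_smul, Matrix.smul_mul]

/-- Left multiplication by an 8×8 matrix as an operator on H_F. -/
def lmul (A : M8) : Module.End ℂ HF where
  toFun ξ := A * ξ
  map_add' x y := Matrix.mul_add A x y
  map_smul' c x := by simp [Matrix.mul_smul]

/-- The representation π_F of A_F = ℂ ⊕ ℍ ⊕ M₃(ℂ) on H_F. -/
def piF (l : ℂ) (q : M2) (m : M3) : Module.End ℂ HF := lmul (Pmat l q m)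

/-- The image π_F(A_F) as a set of operators. -/
def piFSet : Set (Module.End ℂ HF) := { T | ∃ l q m, IsQuat q ∧ T = piF l q m }

/-- The real structure J_F: ξ = [v₁; v₂] ↦ [v₂*; v₁*]. -/
def JF (ξ : HF) : HF :=
  Matrix.of fun i j =>
    if h : (i : ℕ) < 4 then
      conj (ξ ⟨(j : ℕ) + 4, by have := j.isLt; omega⟩ ⟨(i : ℕ), h⟩)
    else
      conj (ξ ⟨(j : ℕ), by have := j.isLt; omega⟩ ⟨(i : ℕ) - 4, by have := i.isLt; omega⟩)

lemma JF_add (x y : HF) : JF (x + y) = JF x + JF y := by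
  funext i j
  by_cases h : (i : ℕ) < 4 <;> simp [JF, h]

lemma JF_smul (c : ℂ) (x : HF) : JF (c • x) = conj c • JF x := by
  funext i j
  by_cases h : (i : ℕ) < 4 <;> simp [JF, h]

/-- Conjugation T ↦ J_F ∘ T ∘ J_F, a ℂ-linear operator on H_F. -/
def conjByJ (T : Module.End ℂ HF) : Module.End ℂ HF where
  toFun ξ := JF (T (JF ξ))
  map_add' x y := by
    show JF (T (JF (x + y))) = JF (T (JF x)) + JF (T (JF y))
    rw [JF_add, map_add, JF_add]
  map_smul' c x := by
    show JF (T (JF (c • x))) = c • JF (T (JF x))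
    rw [JF_smul, _root_.map_smul, JF_smul, Complex.conj_conj]

abbrev E8 (i j : Fin 8) : M8 := Matrix.single i j 1
abbrev E4 (i j : Fin 4) : M4 := Matrix.single i j 1

def M1mat (Yν Ye YR : ℂ) : M8 :=
  conj Yν • E8 0 2 + conj Ye • E8 1 3 + Yν • E8 2 0 + Ye • E8 3 1
    + conj YR • E8 0 4 + YR • E8 4 0

def M2mat (Yu Yd : ℂ) : M8 :=
  conj Yu • E8 0 2 + conj Yd • E8 1 3 + Yu • E8 2 0 + Yd • E8 3 1

def N1mat (Yν Ye : ℂ) : M4 :=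
  conj Yν • E4 0 2 + conj Ye • E4 1 3 + Yν • E4 2 0 + Ye • E4 3 1

def N2mat (Yu Yd : ℂ) : M4 :=
  conj Yu • E4 0 2 + conj Yd • E4 1 3 + Yu • E4 2 0 + Yd • E4 3 1

/-- The internal Dirac operator D_F (one generation). -/
def DF (Yν Ye Yu Yd YR : ℂ) : Module.End ℂ HF :=
  lrOp (M1mat Yν Ye YR) (E4 0 0) + lrOp (M2mat Yu Yd) (1 - E4 0 0)
    + lrOp (E8 4 4) (N1mat Yν Ye) + lrOp (E8 5 5 + E8 6 6 + E8 7 7) (N2mat Yu Yd)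

/-- Generating set of the Clifford algebra: π_F(A_F) ∪ [D_F, π_F(A_F)]. -/
def genSet (Yν Ye Yu Yd YR : ℂ) : Set (Module.End ℂ HF) :=
  piFSet ∪ { T | ∃ l q m, IsQuat q ∧
    T = DF Yν Ye Yu Yd YR * piF l q m - piF l q m * DF Yν Ye Yu Yd YR }

/-- The Clifford algebra Cl_{D_F}(A_F). -/
def ClDF (Yν Ye Yu Yd YR : ℂ) : Subalgebra ℂ (Module.End ℂ HF) :=
  Algebra.adjoin ℂ (genSet Yν Ye Yu Yd YR)

/-- Grading χ_F. -/
def G1 : M8 := Matrix.diagonal ![1, 1, -1, -1, 0, 0, 0, 0]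
def G2 : M8 := Matrix.diagonal ![0, 0, 0, 0, -1, -1, -1, -1]
def G3 : M4 := Matrix.diagonal ![1, 1, -1, -1]

def chiF : Module.End ℂ HF := lmul G1 + lrOp G2 G3

/-- The block-diagonal 8×8 matrix diag(a, λ, m) with blocks of sizes 4, 1, 3. -/
def diagALM (a : M4) (l : ℂ) (m : M3) : M8 :=
  Matrix.of fun i j =>
    if h : (i : ℕ) < 4 ∧ (j : ℕ) < 4 then a ⟨(i : ℕ), h.1⟩ ⟨(j : ℕ), h.2⟩
    else if i = 4 ∧ j = 4 then l
    else if h : 5 ≤ (i : ℕ) ∧ 5 ≤ (j : ℕ) then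
      m ⟨(i : ℕ) - 5, by have := i.isLt; omega⟩ ⟨(j : ℕ) - 5, by have := j.isLt; omega⟩
    else 0

/-- The operator ξ ↦ diag(a,λ,m) ξ e₁₁ + diag(b,λ,m) ξ (1₄ − e₁₁). -/
def Bop (a b : M4) (l : ℂ) (m : M3) : Module.End ℂ HF :=
  lrOp (diagALM a l m) (E4 0 0) + lrOp (diagALM b l m) (1 - E4 0 0)

/-- The algebra B of Lemma (B), as a set of operators. -/
def BSet : Set (Module.End ℂ HF) := { T | ∃ a b l m, T = Bop a b l m }

/-- The commutant C_F of P(A_F) in M₈(ℂ), as a set. -/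
def CFSet : Set M8 := { X | ∃ q11 q12 q21 q22 α β δ : ℂ,
  X = q11 • E8 0 0 + q12 • E8 0 4 + q21 • E8 4 0 + q22 • E8 4 4
    + α • E8 1 1 + β • (E8 2 2 + E8 3 3) + δ • (E8 5 5 + E8 6 6 + E8 7 7) }

/-- The block-diagonal 4×4 matrix diag(λ, m). -/
def diagLM (l : ℂ) (m : M3) : M4 :=
  Matrix.of fun i j =>
    if i = 0 ∧ j = 0 then l
    else if h : 1 ≤ (i : ℕ) ∧ 1 ≤ (j : ℕ) then
      m ⟨(i : ℕ) - 1, by have := i.isLt; omega⟩ ⟨(j : ℕ) - 1, by have := j.isLt; omega⟩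
    else 0

/-- The block-diagonal 4×4 matrix diag(λ, conj λ, q). -/
def diagLLQ (l : ℂ) (q : M2) : M4 :=
  Matrix.of fun i j =>
    if i = 0 ∧ j = 0 then l
    else if i = 1 ∧ j = 1 then conj l
    else if h : 2 ≤ (i : ℕ) ∧ 2 ≤ (j : ℕ) then
      q ⟨(i : ℕ) - 2, by have := i.isLt; omega⟩ ⟨(j : ℕ) - 2, by have := j.isLt; omega⟩
    else 0

/-- E_u = diag(1₄, 0₄) ∈ M₈(ℂ). -/
def Eu : M8 := Matrix.of fun i j => if i = j ∧ (i : ℕ) < 4 then 1 else 0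

/-- E_l = diag(0₄, 1₄) ∈ M₈(ℂ). -/
def El : M8 := Matrix.of fun i j => if i = j ∧ 4 ≤ (i : ℕ) then 1 else 0

/-- The block-diagonal 8×8 matrix diag(b, c) with two 4×4 blocks. -/
def diag44 (b c : M4) : M8 :=
  Matrix.of fun i j =>
    if h : (i : ℕ) < 4 ∧ (j : ℕ) < 4 then b ⟨(i : ℕ), h.1⟩ ⟨(j : ℕ), h.2⟩
    else if h : 4 ≤ (i : ℕ) ∧ 4 ≤ (j : ℕ) then
      c ⟨(i : ℕ) - 4, by have := i.isLt; omega⟩ ⟨(j : ℕ) - 4, by have := j.isLt; omega⟩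
    else 0


/-!
π_F(λ, q, m) is left multiplication by P = diag(A, λ, m) with A = diag(λ, λ̄, q), so it lies in B
with a = b = A. Each summand of D_F has the form ξ ↦ M ξ N, hence [D_F, π_F(a)] is the sum of the
operators ξ ↦ [M, P] ξ N. The quark Yukawa matrix M₂ = diag(N₂, 0, 0), and likewise M₁ without its
Majorana entries, is block diagonal, so its commutator with P is diag([N, A], 0, 0). The Majorana
entries e₁₅, e₅₁ commute with P because P acts by the same scalar λ on e₁ and on e₅, and the
projections e₅₅ and e₆₆ + e₇₇ + e₈₈ commute with the block-diagonal P. Therefore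
[D_F, π_F(a)] is the element of B with a = [N₁, A], b = [N₂, A], λ = 0 and m = 0.
-/

attribute [local instance] LieRing.ofAssociativeRing

lemma lrOp_add_right (A : M8) (B C : M4) : lrOp A B + lrOp A C = lrOp A (B + C) := by
  ext ξ : 1
  simp [lrOp, Matrix.mul_add]

lemma lrOp_one_right (A : M8) : lrOp A 1 = lmul A := by
  ext ξ : 1
  simp [lrOp, lmul]

lemma lrOp_zero_left (B : M4) : lrOp 0 B = 0 := by
  ext ξ : 1
  simp [lrOp]

lemma lie_lrOp_lmul (A P : M8) (B : M4) : ⁅lrOp A B, lmul P⁆ = lrOp ⁅A, P⁆ B := by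
  ext ξ : 1
  simp [Ring.lie_def, lrOp, lmul, Matrix.mul_assoc, Matrix.sub_mul]

lemma lmul_diagALM_mem_BSet (a : M4) (l : ℂ) (m : M3) : lmul (diagALM a l m) ∈ BSet :=
  ⟨a, a, l, m, by rw [Bop, lrOp_add_right, add_sub_cancel, lrOp_one_right]⟩

def blockEquiv : Fin 4 ⊕ (Fin 1 ⊕ Fin 3) ≃ Fin 8 :=
  (Equiv.sumCongr (Equiv.refl _) finSumFinEquiv).trans finSumFinEquiv

lemma diagALM_eq_reindex_fromBlocks (a : M4) (l : ℂ) (m : M3) :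
    diagALM a l m = reindexAlgEquiv ℂ ℂ blockEquiv
      (fromBlocks a 0 0 (fromBlocks (diagonal fun _ => l) 0 0 m)) := by
  ext i j
  fin_cases i <;> fin_cases j <;> rfl

lemma diagALM_mul (a a' : M4) (l l' : ℂ) (m m' : M3) :
    diagALM a l m * diagALM a' l' m' = diagALM (a * a') (l * l') (m * m') := by
  simp only [diagALM_eq_reindex_fromBlocks, ← map_mul, fromBlocks_multiply, diagonal_mul_diagonal]
  simp

lemma diagALM_sub (a a' : M4) (l l' : ℂ) (m m' : M3) :
    diagALM a l m - diagALM a' l' m' = diagALM (a - a') (l - l') (m - m') := by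
  simp only [diagALM_eq_reindex_fromBlocks, ← map_sub]
  congr 1
  simp [sub_eq_add_neg, fromBlocks_neg, fromBlocks_add]

lemma diagALM_zero : diagALM 0 0 0 = 0 := by
  simpa using (diagALM_sub 0 0 0 0 0 0).symm

lemma lie_diagALM (a a' : M4) (l l' : ℂ) (m m' : M3) :
    ⁅diagALM a l m, diagALM a' l' m'⁆ = diagALM ⁅a, a'⁆ 0 ⁅m, m'⁆ := by
  simp only [Ring.lie_def, diagALM_mul, diagALM_sub, mul_comm l, sub_self]

lemma single_lie_eq_zero {n R : Type*} [Fintype n] [DecidableEq n] [CommRing R]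
    {X : Matrix n n R} {i j : n} {x : R} (c : R)
    (hrow : X j = Pi.single j x) (hcol : Xᵀ i = Pi.single i x) :
    ⁅single i j c, X⁆ = 0 := by
  ext a b
  have hXj : X j b = (Pi.single j x : n → R) b := congrFun hrow b
  have hXi : X a i = (Pi.single i x : n → R) a := congrFun hcol a
  rw [Ring.lie_def, Matrix.sub_apply, Matrix.zero_apply, sub_eq_zero]
  rcases eq_or_ne a i with rfl | ha <;> rcases eq_or_ne b j with rfl | hb
  · simp [hXj, hXi, mul_comm]
  · simp [hXj, hb]
  · simp [hXi, ha]
  · simp [ha, hb]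

lemma Pmat_eq_diagALM (l : ℂ) (q : M2) (m : M3) : Pmat l q m = diagALM (diagLLQ l q) l m := by
  ext i j
  fin_cases i <;> fin_cases j <;> rfl

lemma Pmat_row_eq_single (l : ℂ) (q : M2) (m : M3) {i : Fin 8} (hi : i = 0 ∨ i = 4) :
    Pmat l q m i = Pi.single i l := by
  funext k
  rcases hi with rfl | rfl <;> fin_cases k <;> rfl

lemma Pmat_col_eq_single (l : ℂ) (q : M2) (m : M3) {i : Fin 8} (hi : i = 0 ∨ i = 4) :
    (Pmat l q m)ᵀ i = Pi.single i l := by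
  funext k
  rcases hi with rfl | rfl <;> fin_cases k <;> rfl

lemma M2mat_eq_diagALM (Yu Yd : ℂ) : M2mat Yu Yd = diagALM (N2mat Yu Yd) 0 0 := by
  ext i j
  fin_cases i <;> fin_cases j <;> first | rfl | simp [M2mat, diagALM]

lemma lie_M2mat_Pmat (Yu Yd l : ℂ) (q : M2) (m : M3) :
    ⁅M2mat Yu Yd, Pmat l q m⁆ = diagALM ⁅N2mat Yu Yd, diagLLQ l q⁆ 0 0 := by
  rw [M2mat_eq_diagALM, Pmat_eq_diagALM, lie_diagALM, zero_lie]

lemma lie_M1mat_Pmat (Yν Ye YR l : ℂ) (q : M2) (m : M3) :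
    ⁅M1mat Yν Ye YR, Pmat l q m⁆ = diagALM ⁅N1mat Yν Ye, diagLLQ l q⁆ 0 0 := by
  have hMajorana : M1mat Yν Ye YR = M2mat Yν Ye + conj YR • E8 0 4 + YR • E8 4 0 := rfl
  have h04 : ⁅E8 0 4, Pmat l q m⁆ = 0 :=
    single_lie_eq_zero 1 (Pmat_row_eq_single l q m (.inr rfl)) (Pmat_col_eq_single l q m (.inl rfl))
  have h40 : ⁅E8 4 0, Pmat l q m⁆ = 0 :=
    single_lie_eq_zero 1 (Pmat_row_eq_single l q m (.inl rfl)) (Pmat_col_eq_single l q m (.inr rfl))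
  rw [hMajorana, add_lie, add_lie, smul_lie, smul_lie, h04, h40, smul_zero, smul_zero, add_zero,
    add_zero]
  exact lie_M2mat_Pmat Yν Ye l q m

lemma lie_single_four_four_Pmat (l : ℂ) (q : M2) (m : M3) : ⁅E8 4 4, Pmat l q m⁆ = 0 :=
  single_lie_eq_zero 1 (Pmat_row_eq_single l q m (.inr rfl)) (Pmat_col_eq_single l q m (.inr rfl))

lemma single_five_six_seven_eq_diagALM : E8 5 5 + E8 6 6 + E8 7 7 = diagALM 0 0 1 := by
  ext i j
  fin_cases i <;> fin_cases j <;> simp [diagALM]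

lemma lie_single_five_six_seven_Pmat (l : ℂ) (q : M2) (m : M3) :
    ⁅E8 5 5 + E8 6 6 + E8 7 7, Pmat l q m⁆ = 0 := by
  rw [single_five_six_seven_eq_diagALM, Pmat_eq_diagALM, lie_diagALM, zero_lie,
    Ring.lie_def, one_mul, mul_one, sub_self, diagALM_zero]

lemma lie_DF_piF (Yν Ye Yu Yd YR l : ℂ) (q : M2) (m : M3) :
    ⁅DF Yν Ye Yu Yd YR, piF l q m⁆ =
      Bop ⁅N1mat Yν Ye, diagLLQ l q⁆ ⁅N2mat Yu Yd, diagLLQ l q⁆ 0 0 := by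
  rw [DF, piF, add_lie, add_lie, add_lie, lie_lrOp_lmul, lie_lrOp_lmul, lie_lrOp_lmul,
    lie_lrOp_lmul, lie_M1mat_Pmat, lie_M2mat_Pmat, lie_single_four_four_Pmat,
    lie_single_five_six_seven_Pmat, lrOp_zero_left, lrOp_zero_left, add_zero, add_zero]
  rfl

theorem stmt_12_general (Yν Ye Yu Yd YR : ℂ) (l : ℂ) (q : M2) (m : M3) :
    piF l q m ∈ BSet ∧
    DF Yν Ye Yu Yd YR * piF l q m - piF l q m * DF Yν Ye Yu Yd YR ∈ BSet := by
  constructor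
  · rw [piF, Pmat_eq_diagALM]
    exact lmul_diagALM_mem_BSet _ _ _
  · exact ⟨_, _, _, _, lie_DF_piF Yν Ye Yu Yd YR l q m⟩

/-- Cl_{D_F}(A_F) ⊆ B (on generators). -/
theorem stmt_12 (Yν Ye Yu Yd YR : ℂ) (l : ℂ) (q : M2) (m : M3) (hq : IsQuat q) :
    piF l q m ∈ BSet ∧
    DF Yν Ye Yu Yd YR * piF l q m - piF l q m * DF Yν Ye Yu Yd YR ∈ BSet :=
  stmt_12_general Yν Ye Yu Yd YR l q m

end
end

section
/- Every element of B commutes with every element of J_F B J_F, and moreover J_F B J_F equals the commutant of B in End_ℂ(H_F); in particular the commutant of B is isomorphic as a ℂ-algebra to M₄(ℂ) ⊕ M₄(ℂ) ⊕ ℂ ⊕ M₃(ℂ). -/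
open Matrix ComplexConjugate

noncomputable section

/-! Split ξ ∈ H_F into its upper and lower 4×4 blocks, ξ = [v₁; v₂]. An element of B acts by
v₁ ↦ a v₁ e₁₁ + b v₁ (1 - e₁₁) and v₂ ↦ diag(λ, m) v₂, while J_F swaps the blocks up to adjoints.
Hence J_F B J_F consists of the right actions v₁ ↦ v₁ diag(λ', m'), v₂ ↦ e₁₁ v₂ a' + (1 - e₁₁) v₂ b',
which commute with B because diag(λ, m) commutes with e₁₁.

Conversely, B contains matrix units moving the basis vectors in rows 1, 5 and 6 to every other
basis vector, so an operator commuting with B is determined by a few entries of its values on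
those basis vectors. Subtracting the right action with the same entries leaves an operator
commuting with B whose entries all vanish, i.e. zero. The right actions compose in reverse order,
so after transposing the parameters they form an algebra isomorphic to M₄ ⊕ M₄ ⊕ ℂ ⊕ M₃. -/

def upper (ξ : HF) : M4 := ξ.submatrix (Fin.castAdd 4) id

def lower (ξ : HF) : M4 := ξ.submatrix (Fin.addNat · 4) id

lemma ext_upper_lower {ξ η : HF} (hu : upper ξ = upper η) (hl : lower ξ = lower η) : ξ = η := by
  ext i j
  refine Fin.addCases (m := 4) (n := 4) (fun i => ?_) (fun i => ?_) i
  · exact congrFun (congrFun hu i) j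
  · simpa [lower] using congrFun (congrFun hl i) j

lemma End_ext_upper_lower {S T : Module.End ℂ HF} (hu : ∀ ξ, upper (S ξ) = upper (T ξ))
    (hl : ∀ ξ, lower (S ξ) = lower (T ξ)) : S = T :=
  LinearMap.ext fun ξ => ext_upper_lower (hu ξ) (hl ξ)

@[simp] lemma upper_add (ξ η : HF) : upper (ξ + η) = upper ξ + upper η := rfl
@[simp] lemma lower_add (ξ η : HF) : lower (ξ + η) = lower ξ + lower η := rfl
@[simp] lemma lower_sub (ξ η : HF) : lower (ξ - η) = lower ξ - lower η := rfl
@[simp] lemma upper_smul (c : ℂ) (ξ : HF) : upper (c • ξ) = c • upper ξ := rfl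
@[simp] lemma lower_smul (c : ℂ) (ξ : HF) : lower (c • ξ) = c • lower ξ := rfl

lemma upper_mul (ξ : HF) (B : M4) : upper (ξ * B) = upper ξ * B := rfl
lemma lower_mul (ξ : HF) (B : M4) : lower (ξ * B) = lower ξ * B := rfl

lemma upper_JF (ξ : HF) : upper (JF ξ) = (lower ξ)ᴴ := by
  ext i j
  simp [upper, lower, JF]
  rfl

lemma lower_JF (ξ : HF) : lower (JF ξ) = (upper ξ)ᴴ := by
  ext i j
  simp [upper, lower, JF]
  rfl

lemma sum_fin_eight {M : Type*} [AddCommMonoid M] (f : Fin 8 → M) :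
    ∑ k, f k = ∑ k : Fin 4, f (Fin.castAdd 4 k) + ∑ k : Fin 4, f (k.addNat 4) :=
  Fin.sum_univ_add (a := 4) (b := 4) f

section diag44

variable (b c : M4) (i j : Fin 4)

@[simp] lemma diag44_castAdd_castAdd : diag44 b c (Fin.castAdd 4 i) (Fin.castAdd 4 j) = b i j := by
  simp [diag44]

@[simp] lemma diag44_castAdd_addNat : diag44 b c (Fin.castAdd 4 i) (j.addNat 4) = 0 := by
  simp [diag44]

@[simp] lemma diag44_addNat_castAdd : diag44 b c (i.addNat 4) (Fin.castAdd 4 j) = 0 := by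
  simp [diag44]

@[simp] lemma diag44_addNat_addNat : diag44 b c (i.addNat 4) (j.addNat 4) = c i j := by
  simp [diag44]

lemma upper_diag44_mul (ξ : HF) : upper (diag44 b c * ξ) = b * upper ξ := by
  ext i j
  simp [upper, Matrix.mul_apply, sum_fin_eight]

lemma lower_diag44_mul (ξ : HF) : lower (diag44 b c * ξ) = c * lower ξ := by
  ext i j
  simp [lower, Matrix.mul_apply, sum_fin_eight]

lemma diag44_single_zero (x : ℂ) :
    diag44 (single i j x) 0 = single (Fin.castAdd 4 i) (Fin.castAdd 4 j) x := by
  ext k k'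
  refine Fin.addCases (m := 4) (n := 4) (fun k => ?_) (fun k => ?_) k <;>
    refine Fin.addCases (m := 4) (n := 4) (fun k' => ?_) (fun k' => ?_) k' <;>
    simp [single_apply, Fin.ext_iff] <;> omega

lemma diag44_zero_single (x : ℂ) :
    diag44 0 (single i j x) = single (i.addNat 4) (j.addNat 4) x := by
  ext k k'
  refine Fin.addCases (m := 4) (n := 4) (fun k => ?_) (fun k => ?_) k <;>
    refine Fin.addCases (m := 4) (n := 4) (fun k' => ?_) (fun k' => ?_) k' <;>
    simp [single_apply, Fin.ext_iff] <;> omega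

end diag44

section diagLM

variable (l l' : ℂ) (m m' : M3)

@[simp] lemma diagLM_zero_zero : diagLM l m 0 0 = l := by simp [diagLM]

@[simp] lemma diagLM_zero_succ (j : Fin 3) : diagLM l m 0 j.succ = 0 := by simp [diagLM]

@[simp] lemma diagLM_succ_zero (i : Fin 3) : diagLM l m i.succ 0 = 0 := by simp [diagLM]

@[simp] lemma diagLM_succ_succ (i j : Fin 3) : diagLM l m i.succ j.succ = m i j := by
  simp [diagLM]

lemma diagALM_eq_diag44 (a : M4) : diagALM a l m = diag44 a (diagLM l m) := by
  ext i j
  simp only [diagALM, diag44, diagLM, of_apply, Fin.ext_iff, Fin.val_zero]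
  split_ifs <;> first | rfl | (exfalso; omega)

lemma diagLM_zero : diagLM 0 0 = 0 := by
  ext i j
  refine Fin.cases ?_ (fun i => ?_) i <;> refine Fin.cases ?_ (fun j => ?_) j <;> simp

lemma diagLM_one : diagLM 1 1 = 1 := by
  ext i j
  refine Fin.cases ?_ (fun i => ?_) i <;> refine Fin.cases ?_ (fun j => ?_) j <;>
    simp [Matrix.one_apply, (Fin.succ_ne_zero _).symm]

lemma diagLM_add : diagLM (l + l') (m + m') = diagLM l m + diagLM l' m' := by
  ext i j
  refine Fin.cases ?_ (fun i => ?_) i <;> refine Fin.cases ?_ (fun j => ?_) j <;> simp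

lemma diagLM_smul (c : ℂ) : diagLM (c * l) (c • m) = c • diagLM l m := by
  ext i j
  refine Fin.cases ?_ (fun i => ?_) i <;> refine Fin.cases ?_ (fun j => ?_) j <;> simp

lemma diagLM_mul_diagLM : diagLM l m * diagLM l' m' = diagLM (l * l') (m * m') := by
  ext i j
  refine Fin.cases ?_ (fun i => ?_) i <;> refine Fin.cases ?_ (fun j => ?_) j <;>
    simp [Matrix.mul_apply, Fin.sum_univ_succ]

lemma diagLM_conjTranspose : (diagLM l m)ᴴ = diagLM (conj l) mᴴ := by
  ext i j
  refine Fin.cases ?_ (fun i => ?_) i <;> refine Fin.cases ?_ (fun j => ?_) j <;> simp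

lemma diagLM_one_zero : diagLM 1 0 = E4 0 0 := by
  ext i j
  refine Fin.cases ?_ (fun i => ?_) i <;> refine Fin.cases ?_ (fun j => ?_) j <;>
    simp [(Fin.succ_ne_zero _).symm]

lemma diagLM_zero_single (r s : Fin 3) : diagLM 0 (single r s 1) = E4 r.succ s.succ := by
  ext i j
  refine Fin.cases ?_ (fun i => ?_) i <;> refine Fin.cases ?_ (fun j => ?_) j <;>
    simp [single_apply]

lemma commute_diagLM_E4_zero_zero : Commute (diagLM l m) (E4 0 0) := by
  ext i j
  refine Fin.cases ?_ (fun i => ?_) i <;> refine Fin.cases ?_ (fun j => ?_) j <;>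
    simp [Matrix.mul_apply, single_apply, (Fin.succ_ne_zero _).symm]

end diagLM

lemma lrOp_apply (A : M8) (B : M4) (ξ : HF) : lrOp A B ξ = A * ξ * B := rfl

lemma conjByJ_apply (T : Module.End ℂ HF) (ξ : HF) : conjByJ T ξ = JF (T (JF ξ)) := rfl

def BopRight (a b : M4) (l : ℂ) (m : M3) : Module.End ℂ HF :=
  lrOp (diag44 1 0) (diagLM l m) + lrOp (diag44 0 (E4 0 0)) a + lrOp (diag44 0 (1 - E4 0 0)) b

section blocks

variable (a b : M4) (l : ℂ) (m : M3) (ξ : HF)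

lemma upper_Bop : upper (Bop a b l m ξ) = a * upper ξ * E4 0 0 + b * upper ξ * (1 - E4 0 0) := by
  simp [Bop, lrOp_apply, upper_mul, upper_diag44_mul, diagALM_eq_diag44]

lemma lower_Bop : lower (Bop a b l m ξ) = diagLM l m * lower ξ := by
  simp [Bop, lrOp_apply, lower_mul, lower_diag44_mul, diagALM_eq_diag44, Matrix.mul_sub]

lemma upper_BopRight : upper (BopRight a b l m ξ) = upper ξ * diagLM l m := by
  simp [BopRight, lrOp_apply, upper_mul, upper_diag44_mul]

lemma lower_BopRight :
    lower (BopRight a b l m ξ) = E4 0 0 * lower ξ * a + (1 - E4 0 0) * lower ξ * b := by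
  simp [BopRight, lrOp_apply, lower_mul, lower_diag44_mul]

end blocks

lemma conjByJ_Bop (a b : M4) (l : ℂ) (m : M3) :
    conjByJ (Bop a b l m) = BopRight aᴴ bᴴ (conj l) mᴴ := by
  refine End_ext_upper_lower (fun ξ => ?_) (fun ξ => ?_)
  · rw [conjByJ_apply, upper_JF, lower_Bop, lower_JF, upper_BopRight, conjTranspose_mul,
      conjTranspose_conjTranspose, diagLM_conjTranspose]
  · rw [conjByJ_apply, lower_JF, upper_Bop, upper_JF, lower_BopRight]
    simp [conjTranspose_mul, Matrix.mul_assoc]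

lemma Bop_mul_BopRight (a b : M4) (l : ℂ) (m : M3) (a' b' : M4) (l' : ℂ) (m' : M3) :
    Bop a b l m * BopRight a' b' l' m' = BopRight a' b' l' m' * Bop a b l m := by
  refine End_ext_upper_lower (fun ξ => ?_) (fun ξ => ?_)
  · simp only [Module.End.mul_apply, upper_Bop, upper_BopRight, Matrix.mul_sub, Matrix.sub_mul,
      Matrix.add_mul, Matrix.mul_one, Matrix.mul_assoc, (commute_diagLM_E4_zero_zero l' m').eq]
  · simp only [Module.End.mul_apply, lower_Bop, lower_BopRight, Matrix.mul_sub, Matrix.sub_mul,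
      Matrix.mul_add, Matrix.one_mul, ← Matrix.mul_assoc, (commute_diagLM_E4_zero_zero l m).eq]

lemma BopRight_mul_BopRight (a b : M4) (l : ℂ) (m : M3) (a' b' : M4) (l' : ℂ) (m' : M3) :
    BopRight a b l m * BopRight a' b' l' m' = BopRight (a' * a) (b' * b) (l' * l) (m' * m) := by
  refine End_ext_upper_lower (fun ξ => ?_) (fun ξ => ?_)
  · simp only [Module.End.mul_apply, upper_BopRight, Matrix.mul_assoc, diagLM_mul_diagLM]
  · simp only [Module.End.mul_apply, lower_BopRight]
    simp [Matrix.mul_sub, Matrix.sub_mul, Matrix.mul_add, ← Matrix.mul_assoc]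

lemma BopRight_add (a b a' b' : M4) (l l' : ℂ) (m m' : M3) :
    BopRight (a + a') (b + b') (l + l') (m + m') = BopRight a b l m + BopRight a' b' l' m' := by
  refine End_ext_upper_lower (fun ξ => ?_) (fun ξ => ?_)
  · simp [upper_BopRight, diagLM_add, Matrix.mul_add]
  · simp only [lower_BopRight, LinearMap.add_apply, lower_add, Matrix.mul_add]
    abel

lemma BopRight_smul (c : ℂ) (a b : M4) (l : ℂ) (m : M3) :
    BopRight (c • a) (c • b) (c * l) (c • m) = c • BopRight a b l m := by
  refine End_ext_upper_lower (fun ξ => ?_) (fun ξ => ?_)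
  · simp [upper_BopRight, diagLM_smul]
  · simp [lower_BopRight, smul_add]

lemma BopRight_one : BopRight 1 1 1 1 = 1 := by
  refine End_ext_upper_lower (fun ξ => ?_) (fun ξ => ?_)
  · simp [upper_BopRight, diagLM_one]
  · simp [lower_BopRight, Matrix.sub_mul]

lemma Bop_self (a : M4) (l : ℂ) (m : M3) : Bop a a l m = lrOp (diag44 a (diagLM l m)) 1 := by
  refine End_ext_upper_lower (fun ξ => ?_) (fun ξ => ?_)
  · simp [upper_Bop, lrOp_apply, upper_diag44_mul, Matrix.mul_sub]
  · simp [lower_Bop, lrOp_apply, lower_diag44_mul]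

lemma lrOp_E8_castAdd_E4_mem_BSet (p q : Fin 4) :
    lrOp (E8 (Fin.castAdd 4 p) (Fin.castAdd 4 q)) (E4 0 0) ∈ BSet := by
  refine ⟨E4 p q, 0, 0, 0, End_ext_upper_lower (fun ξ => ?_) (fun ξ => ?_)⟩
  · simp [← diag44_single_zero, upper_Bop, lrOp_apply, upper_mul, upper_diag44_mul]
  · simp [← diag44_single_zero, lower_Bop, lrOp_apply, lower_mul, lower_diag44_mul, diagLM_zero]

lemma lrOp_E8_castAdd_one_sub_E4_mem_BSet (p q : Fin 4) :
    lrOp (E8 (Fin.castAdd 4 p) (Fin.castAdd 4 q)) (1 - E4 0 0) ∈ BSet := by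
  refine ⟨0, E4 p q, 0, 0, End_ext_upper_lower (fun ξ => ?_) (fun ξ => ?_)⟩
  · simp [← diag44_single_zero, upper_Bop, lrOp_apply, upper_mul, upper_diag44_mul]
  · simp [← diag44_single_zero, lower_Bop, lrOp_apply, lower_mul, lower_diag44_mul, diagLM_zero]

lemma lrOp_diag44_zero_diagLM_mem_BSet (l : ℂ) (m : M3) :
    lrOp (diag44 0 (diagLM l m)) 1 ∈ BSet :=
  ⟨0, 0, l, m, (Bop_self 0 l m).symm⟩

abbrev EH (k : Fin 8) (c : Fin 4) : HF := Matrix.single k c 1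

@[simp] lemma upper_EH_castAdd (i c : Fin 4) : upper (EH (Fin.castAdd 4 i) c) = E4 i c := by
  ext
  simp [upper, single_apply, Fin.ext_iff]

@[simp] lemma lower_EH_addNat (i c : Fin 4) : lower (EH (i.addNat 4) c) = E4 i c := by
  ext
  simp [lower, single_apply, Fin.ext_iff]

/-- `EH k c = E8 k k₀ * EH k₀ c * Q`, so `D (EH k c) = E8 k k₀ * (D (EH k₀ c) * Q)` only sees
row `k₀` of `D (EH k₀ c) * Q`. -/
lemma apply_EH_eq_zero_of_commute {D : Module.End ℂ HF} {k k₀ : Fin 8} {c : Fin 4} {Q : M4}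
    (hD : Commute (lrOp (E8 k k₀) Q) D) (hQ : EH k₀ c * Q = EH k₀ c)
    (h₀ : ∀ j, (D (EH k₀ c) * Q) k₀ j = 0) : D (EH k c) = 0 := by
  have hkc : EH k c = E8 k k₀ * EH k₀ c * Q := by
    rw [Matrix.mul_assoc, hQ, single_mul_single_same, one_mul]
  have hD' := congrArg (· (EH k₀ c)) hD.eq
  simp only [Module.End.mul_apply, lrOp_apply] at hD'
  rw [hkc, ← hD']
  ext i j
  rw [Matrix.mul_assoc]
  by_cases hi : i = k
  · subst hi
    simp [h₀]
  · simp [hi]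

def rightParams (T : Module.End ℂ HF) : M4 × M4 × ℂ × M3 :=
  (of fun c j => T (EH 4 c) 4 j, of fun c j => T (EH 5 c) 5 j, T (EH 0 0) 0 0,
    of fun r s => T (EH 0 r.succ) 0 s.succ)

lemma rightParams_sub (S T : Module.End ℂ HF) :
    rightParams (S - T) = rightParams S - rightParams T := rfl

lemma rightParams_BopRight (a b : M4) (l : ℂ) (m : M3) :
    rightParams (BopRight a b l m) = (a, b, l, m) := by
  refine Prod.ext ?_ (Prod.ext ?_ (Prod.ext ?_ ?_))
  · ext c j
    show lower (BopRight a b l m (EH ((0 : Fin 4).addNat 4) c)) 0 j = a c j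
    rw [lower_BopRight, lower_EH_addNat]
    simp [Matrix.sub_mul]
  · ext c j
    show lower (BopRight a b l m (EH ((1 : Fin 4).addNat 4) c)) 1 j = b c j
    rw [lower_BopRight, lower_EH_addNat]
    simp [Matrix.sub_mul]
  · show upper (BopRight a b l m (EH (Fin.castAdd 4 0) 0)) 0 0 = l
    rw [upper_BopRight, upper_EH_castAdd]
    simp
  · ext r s
    show upper (BopRight a b l m (EH (Fin.castAdd 4 0) r.succ)) 0 s.succ = m r s
    rw [upper_BopRight, upper_EH_castAdd]
    simp

lemma eq_zero_of_mem_centralizer_of_rightParams_eq_zero {D : Module.End ℂ HF}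
    (hD : D ∈ Subalgebra.centralizer ℂ BSet) (h : rightParams D = 0) : D = 0 := by
  have hcomm : ∀ U ∈ BSet, Commute U D := (Subalgebra.mem_centralizer_iff ℂ).1 hD
  simp only [rightParams, Prod.mk_eq_zero, ← Matrix.ext_iff] at h
  obtain ⟨ha, hb, hl, hm⟩ := h
  have hbasis : ∀ k c, D (EH k c) = 0 := by
    intro k c
    refine Fin.addCases (m := 4) (n := 4) (fun p => ?_) (fun q => ?_) k
    · refine Fin.cases ?_ (fun s => ?_) c
      · refine apply_EH_eq_zero_of_commute
          (hcomm _ (lrOp_E8_castAdd_E4_mem_BSet p 0)) (by simp) fun j => ?_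
        refine Fin.cases ?_ (fun t => ?_) j
        · simpa using hl
        · simp
      · refine apply_EH_eq_zero_of_commute (hcomm _ (lrOp_E8_castAdd_one_sub_E4_mem_BSet p 0))
          (by simp [Matrix.mul_sub]) fun j => ?_
        refine Fin.cases ?_ (fun t => ?_) j
        · simp [Matrix.mul_sub]
        · simpa [Matrix.mul_sub] using hm s t
    · rw [Fin.natAdd_eq_addNat]
      refine Fin.cases ?_ (fun r => ?_) q
      · have h44 := lrOp_diag44_zero_diagLM_mem_BSet 1 0
        rw [diagLM_one_zero, diag44_zero_single] at h44
        exact apply_EH_eq_zero_of_commute (hcomm _ h44) (by simp) (by simpa using ha c)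
      · have h55 := lrOp_diag44_zero_diagLM_mem_BSet 0 (single r 0 1)
        rw [diagLM_zero_single, diag44_zero_single] at h55
        exact apply_EH_eq_zero_of_commute (hcomm _ h55) (by simp) (by simpa using hb c)
  ext ξ : 1
  induction ξ using Matrix.induction_on' with
  | h_zero => simp
  | h_add p q hp hq => simp [hp, hq]
  | h_std_basis k c x =>
    have hx : single k c x = x • EH k c := by rw [smul_single, smul_eq_mul, mul_one]
    rw [hx, map_smul, hbasis, smul_zero, LinearMap.zero_apply]

lemma BopRight_mem_centralizer (a b : M4) (l : ℂ) (m : M3) :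
    BopRight a b l m ∈ Subalgebra.centralizer ℂ BSet := by
  rw [Subalgebra.mem_centralizer_iff]
  rintro _ ⟨a', b', l', m', rfl⟩
  exact Bop_mul_BopRight a' b' l' m' a b l m

lemma mem_centralizer_BSet_iff {T : Module.End ℂ HF} :
    T ∈ Subalgebra.centralizer ℂ BSet ↔ ∃ a b l m, BopRight a b l m = T := by
  refine ⟨fun hT => ?_, fun ⟨a, b, l, m, hT⟩ => hT ▸ BopRight_mem_centralizer a b l m⟩
  rcases hp : rightParams T with ⟨a, b, l, m⟩
  refine ⟨a, b, l, m, sub_eq_zero.1 (eq_zero_of_mem_centralizer_of_rightParams_eq_zero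
    (sub_mem (BopRight_mem_centralizer a b l m) hT) ?_)⟩
  rw [rightParams_sub, rightParams_BopRight, hp, sub_self]

lemma image_conjByJ_BSet :
    conjByJ '' BSet = (Subalgebra.centralizer ℂ BSet : Set (Module.End ℂ HF)) := by
  ext T
  rw [SetLike.mem_coe, mem_centralizer_BSet_iff]
  constructor
  · rintro ⟨_, ⟨a, b, l, m, rfl⟩, rfl⟩
    exact ⟨aᴴ, bᴴ, conj l, mᴴ, (conjByJ_Bop a b l m).symm⟩
  · rintro ⟨a, b, l, m, rfl⟩
    refine ⟨Bop aᴴ bᴴ (conj l) mᴴ, ⟨_, _, _, _, rfl⟩, ?_⟩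
    simp [conjByJ_Bop]

def rightRep : (M4 × M4 × ℂ × M3) →ₐ[ℂ] Module.End ℂ HF :=
  AlgHom.ofLinearMap
    { toFun := fun x => BopRight x.1ᵀ x.2.1ᵀ x.2.2.1 x.2.2.2ᵀ
      map_add' := fun x y => by simpa using BopRight_add _ _ _ _ _ _ _ _
      map_smul' := fun c x => by simpa using BopRight_smul c _ _ _ _ }
    (by simpa using BopRight_one)
    (fun x y => by simp [BopRight_mul_BopRight, mul_comm])

lemma rightRep_apply (x : M4 × M4 × ℂ × M3) :
    rightRep x = BopRight x.1ᵀ x.2.1ᵀ x.2.2.1 x.2.2.2ᵀ := rfl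

lemma rightRep_injective : Function.Injective rightRep := by
  intro x y h
  simpa [rightRep_apply, rightParams_BopRight, Prod.ext_iff] using congrArg rightParams h

lemma range_rightRep : rightRep.range = Subalgebra.centralizer ℂ BSet := by
  ext T
  rw [AlgHom.mem_range, mem_centralizer_BSet_iff]
  constructor
  · rintro ⟨x, rfl⟩
    exact ⟨_, _, _, _, (rightRep_apply x).symm⟩
  · rintro ⟨a, b, l, m, rfl⟩
    exact ⟨(aᵀ, bᵀ, l, mᵀ), by simp [rightRep_apply]⟩

/-- J_F B J_F is the commutant of B. -/
theorem stmt_13 :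
    (∀ T ∈ BSet, ∀ S ∈ conjByJ '' BSet, Commute T S) ∧
    conjByJ '' BSet = (Subalgebra.centralizer ℂ BSet : Set (Module.End ℂ HF)) ∧
    Nonempty ((Subalgebra.centralizer ℂ BSet) ≃ₐ[ℂ] (M4 × M4 × ℂ × M3)) := by
  refine ⟨fun T hT S hS => ?_, image_conjByJ_BSet, ⟨?_⟩⟩
  · rw [image_conjByJ_BSet, SetLike.mem_coe, Subalgebra.mem_centralizer_iff] at hS
    exact hS T hT
  · exact (Subalgebra.equivOfEq _ _ range_rightRep.symm).trans
      (AlgEquiv.ofInjective rightRep rightRep_injective).symm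

end
end
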